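/- arXiv:math/0311383 — 4 statements merged into one kernel-verified Lean document; each statement's English description precedes it below -/
import Mathlib

section
/- Let Λ be a lattice in ℝ², i.e. Λ = AℤΒ² for some invertible real 2×2 matrix A. Then the following are equivalent: (i) the image P₂(Λ) of Λ under the projection P₂ : ℝ² → ℝ, (x,y) ↦ y, is a discrete subgroup of ℝ; (ii) there exists a generator matrix for Λ (a matrix B with Bℤ² = Λ) which is in Hermite normal form, i.e. upper triangular with diagonal entries a,d > 0 and upper-right entry b satisfying 0 ≤ b < a. -/
/-!
The projection of `Aℤ²` to the second coordinate is the subgroup of `ℝ` generated by the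
second row `(c, d)` of `A`, and a subgroup of `ℝ` is discrete iff it is cyclic, say `gℤ`. Then
`c = p g`, `d = q g` with `p m + q n = 1`, so the unimodular column operation `!![-q, m; p, n]`
makes `A` upper triangular without changing the lattice; flipping column signs makes the diagonal
positive, and a shear reduces the corner entry modulo the `(0, 0)` entry. Conversely, if the
generator `B` is upper triangular the projection is `B 1 1 • ℤ`, which is discrete.
-/

/-- The lattice `A ℤ²` generated by a real `2 × 2` matrix `A`. -/
def latticePts (A : Matrix (Fin 2) (Fin 2) ℝ) : Set (Fin 2 → ℝ) :=
  {x | ∃ m n : ℤ, x = A.mulVec ![(m : ℝ), (n : ℝ)]}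

/-- A real `2 × 2` matrix `[[a,b],[c,d]]` is in Hermite normal form if `c = 0`,
`a, d > 0` and `0 ≤ b < a`. -/
def IsHermiteNF (B : Matrix (Fin 2) (Fin 2) ℝ) : Prop :=
  B 1 0 = 0 ∧ 0 < B 0 0 ∧ 0 < B 1 1 ∧ 0 ≤ B 0 1 ∧ B 0 1 < B 0 0

open Matrix AddSubgroup

lemma mem_latticePts_iff {A : Matrix (Fin 2) (Fin 2) ℝ} {x : Fin 2 → ℝ} :
    x ∈ latticePts A ↔ ∃ v : Fin 2 → ℤ, x = A *ᵥ (Int.cast ∘ v) := by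
  constructor
  · rintro ⟨m, n, rfl⟩
    exact ⟨![m, n], by congr 1; ext i; fin_cases i <;> rfl⟩
  · rintro ⟨v, rfl⟩
    exact ⟨v 0, v 1, by congr 1; ext i; fin_cases i <;> rfl⟩

lemma intCast_comp_mulVec {m n R : Type*} [Fintype n] [Ring R] (U : Matrix m n ℤ)
    (v : n → ℤ) : (Int.cast ∘ (U *ᵥ v) : m → R) = U.map Int.cast *ᵥ (Int.cast ∘ v) :=
  funext (RingHom.map_mulVec (Int.castRingHom R) U v)

lemma latticePts_mul_of_isUnit_det (A : Matrix (Fin 2) (Fin 2) ℝ)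
    {U : Matrix (Fin 2) (Fin 2) ℤ} (hU : IsUnit U.det) :
    latticePts (A * U.map Int.cast) = latticePts A := by
  ext x
  simp only [mem_latticePts_iff, ← mulVec_mulVec, ← intCast_comp_mulVec]
  constructor
  · rintro ⟨v, rfl⟩
    exact ⟨U *ᵥ v, rfl⟩
  · rintro ⟨v, rfl⟩
    exact ⟨U⁻¹ *ᵥ v, by rw [mulVec_mulVec, mul_nonsing_inv U hU, one_mulVec]⟩

lemma image_latticePts_apply_one (A : Matrix (Fin 2) (Fin 2) ℝ) :
    (fun x : Fin 2 → ℝ => x 1) '' latticePts A =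
      ((zmultiples (A 1 0) ⊔ zmultiples (A 1 1) : AddSubgroup ℝ) : Set ℝ) := by
  ext y
  simp only [Set.mem_image, latticePts, Set.mem_ofPred_eq, SetLike.mem_coe,
    AddSubgroup.mem_sup, AddSubgroup.mem_zmultiples_iff]
  constructor
  · rintro ⟨x, ⟨m, n, rfl⟩, rfl⟩
    refine ⟨_, ⟨m, rfl⟩, _, ⟨n, rfl⟩, ?_⟩
    simp [mulVec, dotProduct, Fin.sum_univ_two, mul_comm]
  · rintro ⟨_, ⟨m, rfl⟩, _, ⟨n, rfl⟩, rfl⟩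
    exact ⟨_, ⟨m, n, rfl⟩, by simp [mulVec, dotProduct, Fin.sum_univ_two, mul_comm]⟩

lemma exists_bezout_of_sup_zmultiples_eq {K : Type*} [Field K] [CharZero K] {c d g : K}
    (hg : g ≠ 0) (h : zmultiples c ⊔ zmultiples d = zmultiples g) :
    ∃ p q m n : ℤ, c = p * g ∧ d = q * g ∧ p * m + q * n = 1 := by
  have hc : c ∈ zmultiples g := h ▸ AddSubgroup.mem_sup_left (mem_zmultiples c)
  have hd : d ∈ zmultiples g := h ▸ AddSubgroup.mem_sup_right (mem_zmultiples d)
  obtain ⟨p, rfl⟩ := AddSubgroup.mem_zmultiples_iff.mp hc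
  obtain ⟨q, rfl⟩ := AddSubgroup.mem_zmultiples_iff.mp hd
  have hg_mem : g ∈ zmultiples (p • g) ⊔ zmultiples (q • g) := h ▸ mem_zmultiples g
  obtain ⟨_, ⟨m, rfl⟩, _, ⟨n, rfl⟩, hmn⟩ := AddSubgroup.mem_sup.mp hg_mem
  refine ⟨p, q, m, n, zsmul_eq_mul g p, zsmul_eq_mul g q, ?_⟩
  simp only [zsmul_eq_mul] at hmn
  have : ((p * m + q * n : ℤ) : K) * g = 1 * g := by push_cast; linear_combination hmn
  exact_mod_cast mul_right_cancel₀ hg this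

lemma exists_latticePts_eq_upperTriangular {A : Matrix (Fin 2) (Fin 2) ℝ} (hA : A.det ≠ 0)
    {g : ℝ} (hg : zmultiples (A 1 0) ⊔ zmultiples (A 1 1) = zmultiples g) :
    ∃ B : Matrix (Fin 2) (Fin 2) ℝ, latticePts B = latticePts A ∧ B 1 0 = 0 ∧ B.det ≠ 0 := by
  have hg0 : g ≠ 0 := by
    rintro rfl
    rw [zmultiples_zero_eq_bot, sup_eq_bot_iff, zmultiples_eq_bot, zmultiples_eq_bot] at hg
    exact hA (by simp [det_fin_two, hg.1, hg.2])
  obtain ⟨p, q, m, n, hc, hd, hpqmn⟩ := exists_bezout_of_sup_zmultiples_eq hg0 hg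
  set U : Matrix (Fin 2) (Fin 2) ℤ := !![-q, m; p, n]
  have hU : U.det = -1 := by simp only [U, det_fin_two_of]; linear_combination -hpqmn
  refine ⟨A * U.map Int.cast, latticePts_mul_of_isUnit_det A (by simp [hU]), ?_, ?_⟩
  · have hB10 : (A * U.map (Int.cast : ℤ → ℝ)) 1 0 = A 1 0 * -q + A 1 1 * p := by
      simp [U, mul_apply, Fin.sum_univ_two]
    rw [hB10, hc, hd]
    ring
  · rw [det_mul, ← Int.cast_det, hU]
    simpa using hA

lemma exists_latticePts_eq_pos_diag {B : Matrix (Fin 2) (Fin 2) ℝ} (h10 : B 1 0 = 0)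
    (hB : B.det ≠ 0) :
    ∃ C : Matrix (Fin 2) (Fin 2) ℝ, latticePts C = latticePts B ∧
      C 1 0 = 0 ∧ 0 < C 0 0 ∧ 0 < C 1 1 := by
  have hsign : ∀ a : ℝ, a ≠ 0 → ∃ s : ℤ, IsUnit s ∧ 0 < s * a := fun a ha ↦
    ha.lt_or_gt.elim (fun h ↦ ⟨-1, isUnit_one.neg, by simpa using h⟩)
      (fun h ↦ ⟨1, isUnit_one, by simpa using h⟩)
  rw [det_fin_two, h10, mul_zero, sub_zero] at hB
  obtain ⟨s, hs, h00⟩ := hsign _ (left_ne_zero_of_mul hB)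
  obtain ⟨t, ht, h11⟩ := hsign _ (right_ne_zero_of_mul hB)
  refine ⟨B * (diagonal ![s, t]).map Int.cast,
    latticePts_mul_of_isUnit_det B (by simpa using hs.mul ht), ?_, ?_, ?_⟩ <;>
    simp [diagonal_map, mul_diagonal, h10, mul_comm, h00, h11]

lemma exists_latticePts_eq_isHermiteNF {B : Matrix (Fin 2) (Fin 2) ℝ} (h10 : B 1 0 = 0)
    (h00 : 0 < B 0 0) (h11 : 0 < B 1 1) :
    ∃ C : Matrix (Fin 2) (Fin 2) ℝ, latticePts C = latticePts B ∧ IsHermiteNF C := by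
  set k := toIcoDiv h00 0 (B 0 1)
  have hC : B * (!![1, -k; 0, 1] : Matrix (Fin 2) (Fin 2) ℤ).map Int.cast =
      !![B 0 0, B 0 1 - k • B 0 0; 0, B 1 1] := by
    ext i j
    fin_cases i <;> fin_cases j <;>
      simp [mul_apply, Fin.sum_univ_two, h10, zsmul_eq_mul, neg_add_eq_sub, mul_comm]
  rw [self_sub_toIcoDiv_zsmul] at hC
  refine ⟨_, hC ▸ latticePts_mul_of_isUnit_det B (by simp [det_fin_two_of]), ?_⟩
  exact ⟨rfl, h00, h11, toIcoMod_mem_Ico' h00 _⟩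

/-- A lattice `Λ = Aℤ²` in `ℝ²` has a discrete image under the second-coordinate
projection if and only if it possesses a generator matrix in Hermite normal form. -/
theorem stmt_0 (A : Matrix (Fin 2) (Fin 2) ℝ) (hA : A.det ≠ 0) :
    DiscreteTopology ((fun x : Fin 2 → ℝ => x 1) '' latticePts A : Set ℝ) ↔
      ∃ B : Matrix (Fin 2) (Fin 2) ℝ, latticePts B = latticePts A ∧ IsHermiteNF B := by
  constructor
  · intro hD
    rw [image_latticePts_apply_one] at hD
    obtain ⟨g, hg⟩ := (AddSubgroup.isAddCyclic_iff_exists_zmultiples_eq_top _).mp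
      (AddSubgroup.discrete_iff_addCyclic.mpr hD)
    obtain ⟨B, hBA, hB10, hB⟩ := exists_latticePts_eq_upperTriangular hA hg.symm
    obtain ⟨C, hCB, hC10, hC00, hC11⟩ := exists_latticePts_eq_pos_diag hB10 hB
    obtain ⟨D, hDC, hD⟩ := exists_latticePts_eq_isHermiteNF hC10 hC00 hC11
    exact ⟨D, hDC.trans (hCB.trans hBA), hD⟩
  · rintro ⟨B, hBA, hB10, -⟩
    rw [← hBA, image_latticePts_apply_one, hB10, zmultiples_zero_eq_bot, bot_sup_eq]
    exact inferInstanceAs (DiscreteTopology (zmultiples (B 1 1)))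
end

section
/- Let N be a positive even integer and b an integer with 0 ≤ b < N/2. Let c := gcd(N/2, b) and let m₀, n₀ ∈ ℤ be such that (N/2)m₀ + b n₀ = c. Define the unitary operator U on ℓ²(ℤ) by (Uf)(k) = f(k) e^{πi n₀ k² /(cN)}. Then for every g ∈ ℓ²(ℤ), all m,n ∈ ℤ and all l ∈ ℤ: g_{m(N/2)+nb, n/N}(l) = C(m,n) · U((U⁻¹g)_{m(N/2)+nb, −m n₀/(2c) − n b n₀/(cN) + n/N})(l), where C(m,n) = e^{πi (n₀/(cN)) (m(N/2)+nb)²}. -/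
/-!
Write `α = n₀ / (cN)`, so that `U` multiplies by `e^{πiαk²}`. Since `k² - (k - x)² = 2kx - x²`,
conjugating the shift by `x` with `U` only adds the constant phase `e^{πiαx²}` and tilts the
frequency by `αx`; with `N = 2 · (N / 2)`, the frequency in the statement is exactly `n / N - αx`.
-/

open MeasureTheory

/-- Time-frequency shift on `ℓ²(ℤ)`: `g_{x,ω}(l) = e^{2πilω} g(l - x)`. -/
noncomputable def shiftZ (g : ℤ → ℂ) (x : ℤ) (ω : ℝ) : ℤ → ℂ :=
  fun l => Complex.exp (2 * Real.pi * Complex.I * (l : ℂ) * (ω : ℂ)) * g (l - x)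

/-- The chirp (metaplectic) operator `(Uf)(k) = f(k) e^{πi n₀ k² / (cN)}` on `ℓ²(ℤ)`. -/
noncomputable def UZop (n₀ : ℤ) (c N : ℕ) (f : ℤ → ℂ) : ℤ → ℂ :=
  fun k => f k * Complex.exp (Real.pi * Complex.I * (n₀ : ℂ) * (k : ℂ) ^ 2 / ((c : ℂ) * (N : ℂ)))

/-- The inverse chirp operator `(U⁻¹f)(k) = f(k) e^{-πi n₀ k² / (cN)}`. -/
noncomputable def UZopInv (n₀ : ℤ) (c N : ℕ) (f : ℤ → ℂ) : ℤ → ℂ :=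
  fun k => f k * Complex.exp (-(Real.pi * Complex.I * (n₀ : ℂ) * (k : ℂ) ^ 2 / ((c : ℂ) * (N : ℂ))))

theorem shiftZ_eq_phase_mul_UZop_shiftZ_UZopInv (n₀ : ℤ) (c N : ℕ) (g : ℤ → ℂ) (x : ℤ)
    (ω : ℝ) (l : ℤ) :
    shiftZ g x ω l
      = Complex.exp (Real.pi * Complex.I * (n₀ : ℂ) / ((c : ℂ) * (N : ℂ)) * (x : ℂ) ^ 2) *
        UZop n₀ c N (shiftZ (UZopInv n₀ c N g) x (ω - n₀ * x / (c * N))) l := by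
  simp only [shiftZ, UZop, UZopInv]
  have hphase : 2 * Real.pi * Complex.I * l * ω
      = Real.pi * Complex.I * n₀ / (c * N) * x ^ 2
        + (Real.pi * Complex.I * n₀ * l ^ 2 / (c * N)
          + 2 * Real.pi * Complex.I * l * ((ω - n₀ * x / (c * N) : ℝ) : ℂ)
          - Real.pi * Complex.I * n₀ * ((l - x : ℤ) : ℂ) ^ 2 / (c * N)) := by
    push_cast
    ring
  rw [hphase]
  simp only [Complex.exp_add, Complex.exp_sub, Complex.exp_neg]
  ring

theorem frequency_eq_sub_chirp_tilt {N : ℕ} (hN : 0 < N) (hNe : Even N) (c : ℕ)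
    (b : ℕ) (n₀ m n : ℤ) :
    -(m : ℝ) * (n₀ : ℝ) / (2 * (c : ℝ)) - (n : ℝ) * (b : ℝ) * (n₀ : ℝ) / ((c : ℝ) * (N : ℝ))
        + (n : ℝ) / (N : ℝ)
      = n / N - n₀ * ((m * ((N / 2 : ℕ) : ℤ) + n * (b : ℤ) : ℤ) : ℝ) / (c * N) := by
  obtain ⟨M, rfl⟩ : ∃ M, N = 2 * M := hNe.two_dvd
  have hM : (M : ℝ) ≠ 0 := by exact_mod_cast (by omega : M ≠ 0)
  rw [Nat.mul_div_cancel_left _ two_pos]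
  push_cast
  rcases eq_or_ne (c : ℝ) 0 with hc | hc
  · simp [hc]
  · field_simp
    ring

theorem stmt_8_general (N b : ℕ) (hN : 0 < N) (hNe : Even N)
    (n₀ : ℤ)
    (g : ℤ → ℂ) (m n l : ℤ) :
    shiftZ g (m * ((N / 2 : ℕ) : ℤ) + n * (b : ℤ)) ((n : ℝ) / (N : ℝ)) l
      = Complex.exp (Real.pi * Complex.I * (n₀ : ℂ) / ((Nat.gcd (N / 2) b : ℂ) * (N : ℂ)) *
            ((m * ((N / 2 : ℕ) : ℤ) + n * (b : ℤ) : ℤ) : ℂ) ^ 2) *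
        UZop n₀ (Nat.gcd (N / 2) b) N
          (shiftZ (UZopInv n₀ (Nat.gcd (N / 2) b) N g)
            (m * ((N / 2 : ℕ) : ℤ) + n * (b : ℤ))
            (-(m : ℝ) * (n₀ : ℝ) / (2 * (Nat.gcd (N / 2) b : ℝ))
              - (n : ℝ) * (b : ℝ) * (n₀ : ℝ) / ((Nat.gcd (N / 2) b : ℝ) * (N : ℝ))
              + (n : ℝ) / (N : ℝ))) l := by
  rw [frequency_eq_sub_chirp_tilt hN hNe]
  exact shiftZ_eq_phase_mul_UZop_shiftZ_UZopInv _ _ _ _ _ _ _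

/-- Metaplectic covariance on `ℓ²(ℤ)`: with `c = gcd(N/2, b)`, `(N/2)m₀ + bn₀ = c` and
`(Uf)(k) = f(k)e^{πin₀k²/(cN)}`, for every `g ∈ ℓ²(ℤ)`:
`g_{m(N/2)+nb, n/N} = C(m,n) · U((U⁻¹g)_{m(N/2)+nb, -mn₀/(2c) - nbn₀/(cN) + n/N})`
where `C(m,n) = e^{πi(n₀/(cN))(m(N/2)+nb)²}`. -/
theorem stmt_8 (N b : ℕ) (hN : 0 < N) (hNe : Even N) (hb : b < N / 2)
    (m₀ n₀ : ℤ)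
    (hmn : ((N / 2 : ℕ) : ℤ) * m₀ + (b : ℤ) * n₀ = (Nat.gcd (N / 2) b : ℤ))
    (g : ℤ → ℂ) (hg : Memℓp g 2) (m n l : ℤ) :
    shiftZ g (m * ((N / 2 : ℕ) : ℤ) + n * (b : ℤ)) ((n : ℝ) / (N : ℝ)) l
      = Complex.exp (Real.pi * Complex.I * (n₀ : ℂ) / ((Nat.gcd (N / 2) b : ℂ) * (N : ℂ)) *
            ((m * ((N / 2 : ℕ) : ℤ) + n * (b : ℤ) : ℤ) : ℂ) ^ 2) *
        UZop n₀ (Nat.gcd (N / 2) b) N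
          (shiftZ (UZopInv n₀ (Nat.gcd (N / 2) b) N g)
            (m * ((N / 2 : ℕ) : ℤ) + n * (b : ℤ))
            (-(m : ℝ) * (n₀ : ℝ) / (2 * (Nat.gcd (N / 2) b : ℝ))
              - (n : ℝ) * (b : ℝ) * (n₀ : ℝ) / ((Nat.gcd (N / 2) b : ℝ) * (N : ℝ))
              + (n : ℝ) / (N : ℝ))) l :=
  stmt_8_general N b hN hNe n₀ g m n l
end

section
/- Let N be a positive even integer and b an integer with 0 < b < N/2. Let c := gcd(N/2, b), d := lcm(N/2, b), let m₀, n₀ ∈ ℤ satisfy (N/2)m₀ + b n₀ = c, and let φ(m,n) = (m m₀ − (2d/N) n, m n₀ + (d/b) n). Then for every m ∈ ℤ, the set {(m, n mod 2c) : (m,n) ∈ φ⁻¹(ℤ × {0,…,N−1})} equals {m} × {0,…,2c−1}, and the set {n ∈ ℤ : φ(m,n) ∈ ℤ × {0,…,N−1}} has exactly 2c elements. -/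
/-- The map `φ(m,n) = (m m₀ - (2d/N) n, m n₀ + (d/b) n)` (with `d = lcm(N/2, b)`),
and `φ = id` when `b = 0`. -/
def phiZ (N b : ℕ) (m₀ n₀ : ℤ) : ℤ × ℤ → ℤ × ℤ := fun mn =>
  if b = 0 then mn
  else (mn.1 * m₀ - (2 * (Nat.lcm (N / 2) b : ℤ) / (N : ℤ)) * mn.2,
        mn.1 * n₀ + ((Nat.lcm (N / 2) b : ℤ) / (b : ℤ)) * mn.2)

lemma emod_image_Ico (m q C : ℤ) (hC : 0 < C) :
    (fun n : ℤ => (m, n % C)) '' Set.Ico q (q + C)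
      = ({m} : Set ℤ) ×ˢ Set.Ico (0 : ℤ) C := by
  ext ⟨x, y⟩
  simp only [Set.mem_image, Set.mem_Ico, Set.mem_prod, Set.mem_singleton_iff,
    Prod.mk.injEq]
  constructor
  · rintro ⟨n, ⟨hn1, hn2⟩, rfl, rfl⟩
    exact ⟨rfl, Int.emod_nonneg _ hC.ne', Int.emod_lt_of_pos _ hC⟩
  · rintro ⟨rfl, hy1, hy2⟩
    have h1 := Int.emod_nonneg (y - q) hC.ne'
    have h2 := Int.emod_lt_of_pos (y - q) hC
    refine ⟨q + (y - q) % C, ⟨by linarith, by linarith⟩, rfl, ?_⟩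
    have : q + (y - q) % C = y + C * (-((y - q) / C)) := by
      rw [Int.emod_def]; ring
    rw [this, Int.add_mul_emod_self_left, Int.emod_eq_of_lt hy1 hy2]

lemma setOf_interval_eq_Ico (a M C : ℤ) (hM0 : 0 < M) :
    {n : ℤ | a + M * n ∈ Set.Ico (0 : ℤ) (C * M)}
      = Set.Ico (-(a / M)) (-(a / M) + C) := by
  ext n
  simp only [Set.mem_setOf_eq, Set.mem_Ico]
  constructor
  · rintro ⟨h1, h2⟩
    constructor
    · have : -n ≤ a / M := (Int.le_ediv_iff_mul_le hM0).2 (by nlinarith)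
      linarith
    · have : a / M < C - n := by
        rw [Int.ediv_lt_iff_lt_mul hM0]; nlinarith
      linarith
  · rintro ⟨h1, h2⟩
    have f1 : -n * M ≤ a := (Int.le_ediv_iff_mul_le hM0).1 (by linarith)
    have f2 : a < (C - n) * M := (Int.ediv_lt_iff_lt_mul hM0).1 (by linarith)
    constructor <;> nlinarith

lemma ncard_Ico_int (q C : ℤ) : (Set.Ico q (q + C)).ncard = C.toNat := by
  rw [show Set.Ico q (q + C) = ↑(Finset.Ico q (q + C)) from (Finset.coe_Ico _ _).symm,
    Set.ncard_coe_finset, Int.card_Ico]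
  omega

/-- Let `N` be a positive even integer, `0 < b < N/2`, `c = gcd(N/2, b)`,
`d = lcm(N/2, b)`, `(N/2)m₀ + bn₀ = c` and `φ` as above.  Then for every `m ∈ ℤ`:
`{(m, n mod 2c) : (m,n) ∈ φ⁻¹(ℤ × {0,…,N-1})} = {m} × {0,…,2c-1}` and
`{n : (m,n) ∈ φ⁻¹(ℤ × {0,…,N-1})}` has exactly `2c` elements. -/
theorem stmt_10 (N b : ℕ) (hN : 0 < N) (hNe : Even N) (hb0 : 0 < b) (hb : b < N / 2)
    (m₀ n₀ : ℤ)
    (hmn : ((N / 2 : ℕ) : ℤ) * m₀ + (b : ℤ) * n₀ = (Nat.gcd (N / 2) b : ℤ)) (m : ℤ) :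
    ((fun n : ℤ => (m, n % (2 * (Nat.gcd (N / 2) b : ℤ)))) ''
        {n : ℤ | (phiZ N b m₀ n₀ (m, n)).2 ∈ Set.Ico (0 : ℤ) (N : ℤ)}
      = ({m} : Set ℤ) ×ˢ Set.Ico (0 : ℤ) (2 * (Nat.gcd (N / 2) b : ℤ))) ∧
    ({n : ℤ | (phiZ N b m₀ n₀ (m, n)).2 ∈ Set.Ico (0 : ℤ) (N : ℤ)}.ncard
      = 2 * Nat.gcd (N / 2) b) := by
  have hb0' : b ≠ 0 := hb0.ne'
  have hbk : Nat.lcm (N / 2) b / b * b = Nat.lcm (N / 2) b :=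
    Nat.div_mul_cancel (Nat.dvd_lcm_right _ _)
  have hck : Nat.gcd (N / 2) b * (Nat.lcm (N / 2) b / b) * b = (N / 2) * b := by
    rw [mul_assoc, hbk]; exact Nat.gcd_mul_lcm _ _
  have hck' : Nat.gcd (N / 2) b * (Nat.lcm (N / 2) b / b) = N / 2 :=
    Nat.eq_of_mul_eq_mul_right hb0 hck
  have hN2 : N / 2 * 2 = N := Nat.div_mul_cancel hNe.two_dvd
  have hNck : 2 * (Nat.gcd (N / 2) b * (Nat.lcm (N / 2) b / b)) = N := by omega
  have hk0 : 0 < Nat.lcm (N / 2) b / b := by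
    rcases Nat.eq_zero_or_pos (Nat.lcm (N / 2) b / b) with h | h
    · rw [h, mul_zero] at hck'; omega
    · exact h
  have hc0 : 0 < Nat.gcd (N / 2) b := Nat.gcd_pos_of_pos_right _ hb0
  have hM0 : (0 : ℤ) < ((Nat.lcm (N / 2) b / b : ℕ) : ℤ) := Int.natCast_pos.mpr hk0
  have hC0 : (0 : ℤ) < 2 * (Nat.gcd (N / 2) b : ℤ) := by
    have : (0:ℤ) < (Nat.gcd (N / 2) b : ℤ) := Int.natCast_pos.mpr hc0
    linarith
  have hcast : ((Nat.lcm (N / 2) b : ℤ) / (b : ℤ)) = ((Nat.lcm (N / 2) b / b : ℕ) : ℤ) :=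
    (Int.natCast_div _ _).symm
  have hphi : ∀ n : ℤ, (phiZ N b m₀ n₀ (m, n)).2
      = m * n₀ + ((Nat.lcm (N / 2) b / b : ℕ) : ℤ) * n := by
    intro n; simp only [phiZ, if_neg hb0', hcast]
  have hNM : (N : ℤ) = 2 * (Nat.gcd (N / 2) b : ℤ) * ((Nat.lcm (N / 2) b / b : ℕ) : ℤ) := by
    have h := congrArg (Nat.cast : ℕ → ℤ) hNck
    push_cast at h ⊢
    linarith
  have hS : {n : ℤ | (phiZ N b m₀ n₀ (m, n)).2 ∈ Set.Ico (0 : ℤ) (N : ℤ)}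
      = Set.Ico (-(m * n₀ / ((Nat.lcm (N / 2) b / b : ℕ) : ℤ)))
          (-(m * n₀ / ((Nat.lcm (N / 2) b / b : ℕ) : ℤ)) + 2 * (Nat.gcd (N / 2) b : ℤ)) := by
    have := setOf_interval_eq_Ico (m * n₀) ((Nat.lcm (N / 2) b / b : ℕ) : ℤ)
      (2 * (Nat.gcd (N / 2) b : ℤ)) hM0
    rw [← this]
    ext n
    simp only [Set.mem_setOf_eq, hphi n, hNM]
  rw [hS]
  refine ⟨emod_image_Ico m _ _ hC0, ?_⟩
  rw [ncard_Ico_int]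
  omega
end

section
/- Let N be a positive even integer and b an integer with 0 < b < N/2. Let c := gcd(N/2, b), d := lcm(N/2, b), M := 2c, let m₀, n₀ ∈ ℤ satisfy (N/2)m₀ + b n₀ = c, and let φ = (φ₁,φ₂) with φ(m,n) = (m m₀ − (2d/N) n, m n₀ + (d/b) n). Then for all m,n ∈ ℤ: (φ₁(m,n)·(N/2) + φ₂(m,n)·b, −φ₁(m,n)·n₀/(2c) − φ₂(m,n)·b n₀/(cN) + φ₂(m,n)/N) = (m·M/2, n/M), where the second coordinates are real numbers. -/
theorem Nat.lcm_eq_mul_div_gcd (h b : ℕ) : Nat.lcm h b = h * (b / Nat.gcd h b) :=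
  Nat.mul_div_assoc h (Nat.gcd_dvd_right h b)

theorem Nat.lcm_eq_div_gcd_mul (h b : ℕ) : Nat.lcm h b = h / Nat.gcd h b * b :=
  (Nat.div_mul_right_comm (Nat.gcd_dvd_left h b) b).symm

theorem Nat.lcm_div_left_eq_div_gcd {h : ℕ} (b : ℕ) (hh : 0 < h) :
    Nat.lcm h b / h = b / Nat.gcd h b := by
  rw [Nat.lcm_eq_mul_div_gcd, Nat.mul_div_cancel_left _ hh]

theorem Nat.lcm_div_right_eq_div_gcd (h : ℕ) {b : ℕ} (hb : 0 < b) :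
    Nat.lcm h b / b = h / Nat.gcd h b := by
  rw [Nat.lcm_eq_div_gcd_mul, Nat.mul_div_cancel _ hb]

theorem phiZ_apply_of_even {N b : ℕ} (hN : 0 < N) (hNe : Even N) (hb : 0 < b)
    (m₀ n₀ m n : ℤ) :
    phiZ N b m₀ n₀ (m, n) =
      (m * m₀ - ((b / Nat.gcd (N / 2) b : ℕ) : ℤ) * n,
        m * n₀ + ((N / 2 / Nat.gcd (N / 2) b : ℕ) : ℤ) * n) := by
  have hN2 : 2 * (N / 2) = N := Nat.two_mul_div_two_of_even hNe
  rw [phiZ, if_neg hb.ne', ← Nat.lcm_div_right_eq_div_gcd _ hb,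
    ← Nat.lcm_div_left_eq_div_gcd b (by omega),
    ← Nat.mul_div_mul_left (Nat.lcm (N / 2) b) (N / 2) two_pos, hN2]
  push_cast
  rfl

theorem bezout_map_fst_mul_add_snd_mul {R : Type*} [CommRing R] {h b c a e m₀ n₀ : R}
    (ha : h = a * c) (he : b = e * c) (hbez : h * m₀ + b * n₀ = c) (m n : R) :
    (m * m₀ - e * n) * h + (m * n₀ + a * n) * b = m * c := by
  subst ha he
  linear_combination m * hbez

theorem bezout_map_dual_pairing {K : Type*} [Field K] [CharZero K] {N h b c a e m₀ n₀ : K}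
    (hN : N = 2 * h) (ha : h = a * c) (he : b = e * c) (hbez : h * m₀ + b * n₀ = c)
    (hc : c ≠ 0) (ha0 : a ≠ 0) (m n : K) :
    -((m * m₀ - e * n) * n₀) / (2 * c) - (m * n₀ + a * n) * b * n₀ / (c * N)
      + (m * n₀ + a * n) / N = n / (2 * c) := by
  subst hN ha he
  have hbez' : a * m₀ + e * n₀ = 1 := mul_left_cancel₀ hc (by linear_combination hbez)
  field_simp
  linear_combination (-n₀ * m) * hbez'

theorem stmt_11_general (N b : ℕ) (hN : 0 < N) (hNe : Even N) (hb0 : 0 < b)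
    (m₀ n₀ : ℤ)
    (hmn : ((N / 2 : ℕ) : ℤ) * m₀ + (b : ℤ) * n₀ = (Nat.gcd (N / 2) b : ℤ))
    (m n : ℤ) :
    ((phiZ N b m₀ n₀ (m, n)).1 * ((N / 2 : ℕ) : ℤ) + (phiZ N b m₀ n₀ (m, n)).2 * (b : ℤ)
        = m * ((2 * Nat.gcd (N / 2) b / 2 : ℕ) : ℤ)) ∧
    (-(((phiZ N b m₀ n₀ (m, n)).1 : ℝ) * (n₀ : ℝ)) / (2 * (Nat.gcd (N / 2) b : ℝ))
        - ((phiZ N b m₀ n₀ (m, n)).2 : ℝ) * (b : ℝ) * (n₀ : ℝ)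
            / ((Nat.gcd (N / 2) b : ℝ) * (N : ℝ))
        + ((phiZ N b m₀ n₀ (m, n)).2 : ℝ) / (N : ℝ)
      = (n : ℝ) / ((2 * Nat.gcd (N / 2) b : ℕ) : ℝ)) := by
  have hN2 : N = 2 * (N / 2) := (Nat.two_mul_div_two_of_even hNe).symm
  have hc : 0 < Nat.gcd (N / 2) b := Nat.gcd_pos_of_pos_right _ hb0
  have ha := (Nat.div_mul_cancel (Nat.gcd_dvd_left (N / 2) b)).symm
  have he := (Nat.div_mul_cancel (Nat.gcd_dvd_right (N / 2) b)).symm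
  have ha0 : N / 2 / Nat.gcd (N / 2) b ≠ 0 :=
    (Nat.div_pos (Nat.gcd_le_left _ (by omega)) hc).ne'
  rw [phiZ_apply_of_even hN hNe hb0, Nat.mul_div_cancel_left _ two_pos]
  -- keeps `push_cast` from turning the casts of these quotients into integer divisions
  generalize N / 2 / Nat.gcd (N / 2) b = a, b / Nat.gcd (N / 2) b = e, Nat.gcd (N / 2) b = c,
    N / 2 = h at *
  constructor
  · exact bezout_map_fst_mul_add_snd_mul (by exact_mod_cast ha) (by exact_mod_cast he) hmn m n
  · push_cast
    exact bezout_map_dual_pairing (h := (h : ℝ)) (by exact_mod_cast hN2) (by exact_mod_cast ha)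
      (by exact_mod_cast he) (by exact_mod_cast hmn) (by exact_mod_cast hc.ne')
      (by exact_mod_cast ha0) _ _

/-- With `c = gcd(N/2,b)`, `d = lcm(N/2,b)`, `M = 2c`, `(N/2)m₀ + bn₀ = c`, and `φ` as
above: for all `m, n ∈ ℤ`,
`(φ₁(m,n)(N/2) + φ₂(m,n)b, -φ₁(m,n)n₀/(2c) - φ₂(m,n)bn₀/(cN) + φ₂(m,n)/N) = (mM/2, n/M)`. -/
theorem stmt_11 (N b : ℕ) (hN : 0 < N) (hNe : Even N) (hb0 : 0 < b) (hb : b < N / 2)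
    (m₀ n₀ : ℤ)
    (hmn : ((N / 2 : ℕ) : ℤ) * m₀ + (b : ℤ) * n₀ = (Nat.gcd (N / 2) b : ℤ))
    (m n : ℤ) :
    ((phiZ N b m₀ n₀ (m, n)).1 * ((N / 2 : ℕ) : ℤ) + (phiZ N b m₀ n₀ (m, n)).2 * (b : ℤ)
        = m * ((2 * Nat.gcd (N / 2) b / 2 : ℕ) : ℤ)) ∧
    (-(((phiZ N b m₀ n₀ (m, n)).1 : ℝ) * (n₀ : ℝ)) / (2 * (Nat.gcd (N / 2) b : ℝ))
        - ((phiZ N b m₀ n₀ (m, n)).2 : ℝ) * (b : ℝ) * (n₀ : ℝ)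
            / ((Nat.gcd (N / 2) b : ℝ) * (N : ℝ))
        + ((phiZ N b m₀ n₀ (m, n)).2 : ℝ) / (N : ℝ)
      = (n : ℝ) / ((2 * Nat.gcd (N / 2) b : ℕ) : ℝ)) :=
  stmt_11_general N b hN hNe hb0 m₀ n₀ hmn m n
end
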